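/- Let s > 0, c₀ > 0, N_p > 0, γ₀ > 0 and u_b ∈ (0, 1] be real constants. Define β(u) = γ₀ u²/u_b², σ²(u) = s + (c₀/N_p)·(1 + 1/β(u))², and f(u) = ln(σ²(u)) + 2 ln u for u > 0. Set x* = 1 + √(1 + N_p·s/c₀), β* = 1/(x* − 1), and u* = u_b·√(β*/γ₀). Then u* > 0 and f has derivative zero at u*, i.e. u* is a critical point of f. -/

import Mathlib

/-!
Because `β` is homogeneous of degree two, `y = 1/β` satisfies `u y' = -2y`, and with
`k = c₀/N_p` this gives `u f'(u) = 2 (s + k (1 - y²)) / σ²(u)`. So `f'` vanishes where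
`y² = 1 + s/k = 1 + N_p s/c₀`, i.e. where `y = x* - 1 = 1/β*`, and `β(u*) = β*`.
-/

open Real

theorem hasDerivAt_const_mul_sq_div {γ d u : ℝ} :
    HasDerivAt (fun v => γ * v ^ 2 / d) (2 * (γ * u ^ 2 / d) / u) u := by
  refine (((hasDerivAt_pow 2 u).const_mul γ).div_const d).congr_deriv ?_
  field_simp
  ring

theorem hasDerivAt_log_add_mul_one_add_inv_sq_add_two_log {β : ℝ → ℝ} {s k u : ℝ}
    (hβ : HasDerivAt β (2 * β u / u) u) (hβu : β u ≠ 0) (hu : u ≠ 0)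
    (hσ : s + k * (1 + 1 / β u) ^ 2 ≠ 0) :
    HasDerivAt (fun v => log (s + k * (1 + 1 / β v) ^ 2) + 2 * log v)
      (2 * (s + k * (1 - (1 / β u) ^ 2)) / (u * (s + k * (1 + 1 / β u) ^ 2))) u := by
  have hinv : HasDerivAt (fun v => 1 / β v) (-2 * (1 / β u) / u) u := by
    simp only [one_div]
    exact (hβ.fun_inv hβu).congr_deriv (by field_simp)
  have hσ' := (((hinv.const_add 1).fun_pow 2).const_mul k).const_add s
  refine ((hσ'.log hσ).add ((hasDerivAt_log hu).const_mul 2)).congr_deriv ?_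
  generalize 1 / β u = y at *
  field_simp
  ring

theorem sensing_optimal_elevation_general
    (s c₀ Np γ₀ ub : ℝ) (hs : 0 < s) (hc₀ : 0 < c₀) (hNp : 0 < Np)
    (hγ₀ : 0 < γ₀) (hub0 : 0 < ub) :
    let β : ℝ → ℝ := fun u => γ₀ * u ^ 2 / ub ^ 2
    let σsq : ℝ → ℝ := fun u => s + (c₀ / Np) * (1 + 1 / β u) ^ 2
    let f : ℝ → ℝ := fun u => Real.log (σsq u) + 2 * Real.log u
    let xstar : ℝ := 1 + Real.sqrt (1 + Np * s / c₀)
    let βstar : ℝ := 1 / (xstar - 1)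
    let ustar : ℝ := ub * Real.sqrt (βstar / γ₀)
    0 < ustar ∧ HasDerivAt f 0 ustar := by
  intro β σsq f xstar βstar ustar
  set T := √(1 + Np * s / c₀)
  have hT : 0 < T := sqrt_pos.mpr (by positivity)
  have hT_sq : T ^ 2 = 1 + Np * s / c₀ := sq_sqrt (by positivity)
  have hβstar : βstar = 1 / T := by simp only [βstar, xstar, add_sub_cancel_left, T]
  have hβstar_div : 0 < βstar / γ₀ := by rw [hβstar]; positivity
  have hustar : 0 < ustar := mul_pos hub0 (sqrt_pos.mpr hβstar_div)
  have hβ_ustar : 1 / β ustar = T := by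
    simp only [β, ustar, mul_pow, sq_sqrt hβstar_div.le]
    rw [hβstar]
    field_simp
  refine ⟨hustar, ?_⟩
  have hf := hasDerivAt_log_add_mul_one_add_inv_sq_add_two_log (β := β) (k := c₀ / Np)
    hasDerivAt_const_mul_sq_div
    (by rw [← one_div_one_div (β ustar), hβ_ustar]; positivity) hustar.ne'
    (by rw [hβ_ustar]; positivity)
  rw [hβ_ustar, hT_sq] at hf
  refine hf.congr_deriv ?_
  field_simp
  ring

/-- Sensing-optimal elevation (Lemma: sweet spot): with
`β(u) = γ₀ u²/u_b²`, `σ²(u) = s + (c₀/N_p)(1 + 1/β(u))²` and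
`f(u) = ln σ²(u) + 2 ln u`, the point
`u* = u_b √(β*/γ₀)` with `β* = 1/(x* - 1)`, `x* = 1 + √(1 + N_p s/c₀)`
is positive and is a critical point of `f`. -/
theorem sensing_optimal_elevation
    (s c₀ Np γ₀ ub : ℝ) (hs : 0 < s) (hc₀ : 0 < c₀) (hNp : 0 < Np)
    (hγ₀ : 0 < γ₀) (hub0 : 0 < ub) (hub1 : ub ≤ 1) :
    let β : ℝ → ℝ := fun u => γ₀ * u ^ 2 / ub ^ 2
    let σsq : ℝ → ℝ := fun u => s + (c₀ / Np) * (1 + 1 / β u) ^ 2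
    let f : ℝ → ℝ := fun u => Real.log (σsq u) + 2 * Real.log u
    let xstar : ℝ := 1 + Real.sqrt (1 + Np * s / c₀)
    let βstar : ℝ := 1 / (xstar - 1)
    let ustar : ℝ := ub * Real.sqrt (βstar / γ₀)
    0 < ustar ∧ HasDerivAt f 0 ustar :=
  sensing_optimal_elevation_general s c₀ Np γ₀ ub hs hc₀ hNp hγ₀ hub0
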